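/- arXiv:1210.3083 — 2 statements merged into one kernel-verified Lean document; each statement's English description precedes it below -/
import Mathlib

section
/- There exists a universal constant C > 0 such that for all nonnegative integers k and l, ∑_{p=0}^{k} ∑_{q=0}^{l} ( [k]_2 [l]_2 / ( [p]_2 [k−p]_2 [q]_2 [l−q]_2 ) )^2 ≤ C. -/
/-- `br m = max m 1`, the bracket convention `[m]` from the paper, as a real number. -/
noncomputable def br (m : ℤ) : ℝ := max (m : ℝ) 1

/-- `brf m k = [m]_k = [m]·[m-1]⋯[m-k+1]`, the modified falling factorial;
in particular `brf m 2 = [m]_2 = [m][m-1]`. -/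
noncomputable def brf (m : ℤ) (k : ℕ) : ℝ := ∏ i ∈ Finset.range k, br (m - i)

/-!
Since `[p + q]_2 ≤ (p + q)^2 + 1 ≤ 9 ([p]_2 + [q]_2)`, each summand of the one-variable sum
`∑_p ([k]_2 / ([p]_2 [k-p]_2))^2` is at most `162 ([p]_2⁻² + [k-p]_2⁻²)`, and
`∑_p [p]_2⁻² ≤ ∑_p [p]_2⁻¹ ≤ 3` by telescoping `1 / (p (p-1)) = 1 / (p-1) - 1 / p`.
The double sum is the product of two such one-variable sums.
-/

open Finset

lemma one_le_br (m : ℤ) : 1 ≤ br m := le_max_right _ _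

lemma brf_two (m : ℤ) : brf m 2 = br m * br (m - 1) := by
  simp [brf, prod_range_succ]

lemma one_le_brf_two (m : ℤ) : 1 ≤ brf m 2 := by
  rw [brf_two]
  exact one_le_mul_of_one_le_of_one_le (one_le_br m) (one_le_br _)

lemma brf_two_pos (m : ℤ) : 0 < brf m 2 := one_pos.trans_le (one_le_brf_two m)

lemma br_of_le_one {m : ℤ} (hm : m ≤ 1) : br m = 1 := max_eq_right (by exact_mod_cast hm)

lemma br_of_one_le {m : ℤ} (hm : 1 ≤ m) : br m = m := max_eq_left (by exact_mod_cast hm)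

lemma brf_two_of_le_one {m : ℤ} (hm : m ≤ 1) : brf m 2 = 1 := by
  rw [brf_two, br_of_le_one hm, br_of_le_one (by omega), one_mul]

lemma brf_two_natCast_add_two (n : ℕ) : brf ((n + 2 : ℕ) : ℤ) 2 = ((n : ℝ) + 2) * (n + 1) := by
  rw [brf_two, br_of_one_le (by omega), br_of_one_le (by omega)]
  push_cast
  ring

lemma sq_le_four_mul_brf_two (n : ℕ) : (n : ℝ) ^ 2 ≤ 4 * brf n 2 := by
  match n with
  | 0 | 1 => norm_num [brf_two_of_le_one]
  | n + 2 =>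
    rw [brf_two_natCast_add_two]
    push_cast
    nlinarith [(n.cast_nonneg : (0 : ℝ) ≤ n)]

lemma brf_two_le_sq_add_one (n : ℕ) : brf n 2 ≤ (n : ℝ) ^ 2 + 1 := by
  match n with
  | 0 | 1 => norm_num [brf_two_of_le_one]
  | n + 2 =>
    rw [brf_two_natCast_add_two]
    push_cast
    nlinarith [(n.cast_nonneg : (0 : ℝ) ≤ n)]

lemma brf_two_add_le (p q : ℕ) : brf ((p : ℤ) + q) 2 ≤ 9 * (brf p 2 + brf q 2) := by
  have h := brf_two_le_sq_add_one (p + q)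
  push_cast at h
  nlinarith [sq_le_four_mul_brf_two p, sq_le_four_mul_brf_two q, one_le_brf_two p,
    one_le_brf_two q, sq_nonneg ((p : ℝ) - q)]

lemma sq_div_mul_le_of_le_mul_add {a b c K : ℝ} (ha : 0 < a) (hb : 0 < b) (hc : 0 ≤ c)
    (h : c ≤ K * (a + b)) : (c / (a * b)) ^ 2 ≤ 2 * K ^ 2 * (a⁻¹ ^ 2 + b⁻¹ ^ 2) := by
  have hcK : c / (a * b) ≤ K * (a⁻¹ + b⁻¹) := by
    rw [div_le_iff₀ (mul_pos ha hb)]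
    have hab : K * (a⁻¹ + b⁻¹) * (a * b) = K * (a + b) := by
      field_simp
      ring
    rwa [hab]
  calc (c / (a * b)) ^ 2 ≤ (K * (a⁻¹ + b⁻¹)) ^ 2 := by gcongr
    _ ≤ 2 * K ^ 2 * (a⁻¹ ^ 2 + b⁻¹ ^ 2) := by
      nlinarith [mul_nonneg (sq_nonneg K) (sq_nonneg (a⁻¹ - b⁻¹))]

lemma sum_range_inv_brf_two (n : ℕ) :
    ∑ p ∈ range (n + 2), (brf p 2)⁻¹ = 3 - ((n : ℝ) + 1)⁻¹ := by
  induction n with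
  | zero => norm_num [sum_range_succ, brf_two_of_le_one]
  | succ n ih =>
    rw [sum_range_succ, ih, brf_two_natCast_add_two]
    push_cast
    field_simp
    ring

lemma sum_range_inv_brf_two_le (k : ℕ) : ∑ p ∈ range (k + 1), (brf p 2)⁻¹ ≤ 3 :=
  calc ∑ p ∈ range (k + 1), (brf p 2)⁻¹ ≤ ∑ p ∈ range (k + 2), (brf p 2)⁻¹ :=
        sum_le_sum_of_subset_of_nonneg (range_mono (by omega))
          fun p _ _ => (inv_pos.2 (brf_two_pos p)).le
    _ ≤ 3 := by rw [sum_range_inv_brf_two]; linarith [inv_pos.2 (Nat.cast_add_one_pos (α := ℝ) k)]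

lemma sum_range_inv_brf_two_sq_le (k : ℕ) : ∑ p ∈ range (k + 1), (brf p 2)⁻¹ ^ 2 ≤ 3 := by
  refine le_trans (sum_le_sum fun p _ => ?_) (sum_range_inv_brf_two_le k)
  exact pow_le_of_le_one (inv_pos.2 (brf_two_pos p)).le
    (inv_le_one_of_one_le₀ (one_le_brf_two p)) two_ne_zero

lemma sum_range_sq_brf_two_div_le (k : ℕ) :
    ∑ p ∈ range (k + 1), (brf k 2 / (brf p 2 * brf ((k : ℤ) - p) 2)) ^ 2 ≤ 972 := by
  have hterm : ∀ p ∈ range (k + 1), (brf k 2 / (brf p 2 * brf ((k : ℤ) - p) 2)) ^ 2 ≤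
      162 * ((brf p 2)⁻¹ ^ 2 + (brf ((k : ℤ) - p) 2)⁻¹ ^ 2) := by
    intro p hp
    obtain ⟨q, rfl⟩ := Nat.exists_eq_add_of_le (Nat.lt_succ_iff.1 (mem_range.1 hp))
    have hq : ((p + q : ℕ) : ℤ) - p = q := by push_cast; ring
    rw [hq]
    convert sq_div_mul_le_of_le_mul_add (brf_two_pos p) (brf_two_pos q) (brf_two_pos _).le
      (by exact_mod_cast brf_two_add_le p q) using 1
    norm_num
  have hreflect : ∑ p ∈ range (k + 1), (brf ((k : ℤ) - p) 2)⁻¹ ^ 2 =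
      ∑ p ∈ range (k + 1), (brf p 2)⁻¹ ^ 2 := by
    rw [← sum_range_reflect (fun p : ℕ => (brf p 2)⁻¹ ^ 2)]
    refine sum_congr rfl fun p hp => ?_
    have hp := mem_range.1 hp
    congr 3
    omega
  calc _ ≤ ∑ p ∈ range (k + 1), 162 * ((brf p 2)⁻¹ ^ 2 + (brf ((k : ℤ) - p) 2)⁻¹ ^ 2) :=
        sum_le_sum hterm
    _ = 162 * (2 * ∑ p ∈ range (k + 1), (brf p 2)⁻¹ ^ 2) := by
        rw [← mul_sum, sum_add_distrib, hreflect, two_mul]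
    _ ≤ 972 := by linarith [sum_range_inv_brf_two_sq_le k]

/-- there is a universal constant `C > 0` such that for all `k, l ≥ 0`,
`∑_{p=0}^k ∑_{q=0}^l ([k]_2 [l]_2 / ([p]_2 [k-p]_2 [q]_2 [l-q]_2))^2 ≤ C`. -/
theorem sum_sq_ratio_brf_two_le :
    ∃ C : ℝ, 0 < C ∧ ∀ k l : ℕ,
      ∑ p ∈ Finset.range (k + 1), ∑ q ∈ Finset.range (l + 1),
        ((brf k 2 * brf l 2) /
          (brf p 2 * brf ((k : ℤ) - p) 2 * brf q 2 * brf ((l : ℤ) - q) 2)) ^ 2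
        ≤ C := by
  refine ⟨972 ^ 2, by norm_num, fun k l => ?_⟩
  have hfactor : ∀ p q : ℕ,
      ((brf k 2 * brf l 2) /
          (brf p 2 * brf ((k : ℤ) - p) 2 * brf q 2 * brf ((l : ℤ) - q) 2)) ^ 2 =
        (brf k 2 / (brf p 2 * brf ((k : ℤ) - p) 2)) ^ 2 *
          (brf l 2 / (brf q 2 * brf ((l : ℤ) - q) 2)) ^ 2 := by
    intro p q
    rw [← mul_pow, div_mul_div_comm, mul_assoc (brf p 2 * _)]
  simp_rw [hfactor, ← sum_mul_sum]
  rw [sq]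
  exact mul_le_mul (sum_range_sq_brf_two_div_le k) (sum_range_sq_brf_two_div_le l)
    (sum_nonneg fun _ _ => sq_nonneg _) (by norm_num)
end

section
/- Let n ≥ 1, C > 0, M > 0, δ > 0, and θ ≥ 0 be real numbers satisfying C θ^2 (1+δ) M ≤ δ. Let (x_{k,l}) and (f_{k,l}) be families of nonnegative real numbers indexed by pairs of nonnegative integers such that: x_{0,0} = n; x_{k,0} = 0 for every k ≥ 1; for all nonnegative integers k, l one has x_{k,l+1} ≤ C θ^2 ∑_{p+q=k} ∑_{r+s=l} x_{p,r} f_{q,s}; and ∑_{0 ≤ k+l ≤ N} f_{k,l} ≤ M for every nonnegative integer N. Then ∑_{0 ≤ k+l ≤ N} x_{k,l} ≤ (1+δ) n for every nonnegative integer N. -/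
/-!
Write `S_N(g)` for the sum of `g` over the triangle `k + l ≤ N`. Splitting off the column `l = 0`
gives `S_{N+1}(x) = n + S_N(x_{·,·+1})`, and the recursion bounds the second term by `C θ²` times
the triangle sum of the double Cauchy product of `x` and `f`. Every term `x_{p,r} f_{q,s}` of that
sum has `p + r ≤ N` and `q + s ≤ N` and occurs only once, so it is at most `S_N(x) S_N(f)`.
Inductively `S_{N+1}(x) ≤ n + C θ² (1 + δ) n M ≤ (1 + δ) n`.
-/

/-- Sum of `f k l` over all pairs `(k,l)` of nonnegative integers with `k + l ≤ N`. -/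
noncomputable def sumUpTo (N : ℕ) (f : ℕ → ℕ → ℝ) : ℝ :=
  ∑ k ∈ Finset.range (N + 1), ∑ l ∈ Finset.range (N + 1 - k), f k l

open Finset

theorem Finset.sum_comp_le_sum_of_injOn {ι κ M : Type*} [AddCommMonoid M] [PartialOrder M]
    [IsOrderedAddMonoid M] {s : Finset ι} {t : Finset κ} (e : ι → κ) (he : Set.InjOn e s)
    (hst : Set.MapsTo e s t) {f : κ → M} (hf : ∀ k ∈ t, 0 ≤ f k) :
    ∑ i ∈ s, f (e i) ≤ ∑ k ∈ t, f k := by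
  classical
  rw [← sum_image he]
  exact sum_le_sum_of_subset_of_nonneg (image_subset_iff.2 hst) fun k hk _ => hf k hk

def triangle (N : ℕ) : Finset (ℕ × ℕ) :=
  (range (N + 1) ×ˢ range (N + 1)).filter fun w => w.1 + w.2 ≤ N

@[simp]
theorem mem_triangle {N : ℕ} {w : ℕ × ℕ} : w ∈ triangle N ↔ w.1 + w.2 ≤ N := by
  simp only [triangle, mem_filter, mem_product, mem_range]
  omega

theorem sumUpTo_eq_sum_triangle (N : ℕ) (g : ℕ → ℕ → ℝ) :
    sumUpTo N g = ∑ w ∈ triangle N, g w.1 w.2 :=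
  (sum_finset_product' _ _ _ fun w => by simp only [mem_triangle, mem_range]; omega).symm

theorem sumUpTo_nonneg {N : ℕ} {g : ℕ → ℕ → ℝ} (hg : ∀ k l, 0 ≤ g k l) : 0 ≤ sumUpTo N g :=
  sum_nonneg fun _ _ => sum_nonneg fun _ _ => hg _ _

theorem sumUpTo_mono {N : ℕ} {g h : ℕ → ℕ → ℝ} (hgh : ∀ k l, g k l ≤ h k l) :
    sumUpTo N g ≤ sumUpTo N h :=
  sum_le_sum fun _ _ => sum_le_sum fun _ _ => hgh _ _

theorem sumUpTo_const_mul (N : ℕ) (c : ℝ) (g : ℕ → ℕ → ℝ) :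
    sumUpTo N (fun k l => c * g k l) = c * sumUpTo N g := by
  simp only [sumUpTo, mul_sum]

theorem sumUpTo_succ (N : ℕ) (g : ℕ → ℕ → ℝ) :
    sumUpTo (N + 1) g = ∑ k ∈ range (N + 2), g k 0 + sumUpTo N fun k l => g k (l + 1) := by
  have hrow : ∀ k ∈ range (N + 2), ∑ l ∈ range (N + 2 - k), g k l
      = g k 0 + ∑ l ∈ range (N + 1 - k), g k (l + 1) := by
    intro k hk
    rw [show N + 2 - k = N + 1 - k + 1 by simp only [mem_range] at hk; omega, sum_range_succ',
      add_comm]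
  rw [sumUpTo, sum_congr rfl hrow, sum_add_distrib, sumUpTo]
  congr 1
  rw [sum_range_succ, Nat.sub_self, sum_range_zero, add_zero]

theorem sumUpTo_antidiagonal_conv_le (N : ℕ) {x f : ℕ → ℕ → ℝ}
    (hx : ∀ k l, 0 ≤ x k l) (hf : ∀ k l, 0 ≤ f k l) :
    sumUpTo N (fun k l => ∑ pq ∈ antidiagonal k, ∑ rs ∈ antidiagonal l,
        x pq.1 rs.1 * f pq.2 rs.2) ≤ sumUpTo N x * sumUpTo N f := by
  simp only [sumUpTo_eq_sum_triangle, sum_mul_sum, ← sum_product' (triangle N) (triangle N),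
    ← sum_product' (antidiagonal _) (antidiagonal _) fun pq rs => x pq.1 rs.1 * f pq.2 rs.2]
  rw [sum_sigma']
  refine sum_comp_le_sum_of_injOn
    (fun z : (_ : ℕ × ℕ) × (ℕ × ℕ) × (ℕ × ℕ) => ((z.2.1.1, z.2.2.1), (z.2.1.2, z.2.2.2)))
    (f := fun ab : (ℕ × ℕ) × ℕ × ℕ => x ab.1.1 ab.1.2 * f ab.2.1 ab.2.2) ?_ ?_
    fun _ _ => mul_nonneg (hx _ _) (hf _ _)
  · rintro ⟨⟨k, l⟩, ⟨p, q⟩, r, s⟩ hz ⟨⟨k', l'⟩, ⟨p', q'⟩, r', s'⟩ hz' h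
    simp only [coe_sigma, Set.mem_sigma_iff, coe_product, Set.mem_prod, mem_coe,
      HasAntidiagonal.mem_antidiagonal, Prod.mk.injEq] at hz hz' h
    obtain ⟨⟨rfl, rfl⟩, rfl, rfl⟩ := h
    obtain ⟨-, rfl, rfl⟩ := hz
    obtain ⟨-, rfl, rfl⟩ := hz'
    rfl
  · rintro ⟨w, ⟨p, q⟩, r, s⟩ hz
    simp only [coe_sigma, Set.mem_sigma_iff, coe_product, Set.mem_prod, mem_coe,
      HasAntidiagonal.mem_antidiagonal, mem_triangle] at hz ⊢
    omega

theorem inverse_metric_inductive_bound_general (n C M δ θ : ℝ)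
    (hn : 1 ≤ n) (hC : 0 < C) (hδ : 0 < δ)
    (hsmall : C * θ ^ 2 * (1 + δ) * M ≤ δ)
    (x f : ℕ → ℕ → ℝ)
    (hx : ∀ k l, 0 ≤ x k l) (hf : ∀ k l, 0 ≤ f k l)
    (hx00 : x 0 0 = n) (hxk0 : ∀ k, 1 ≤ k → x k 0 = 0)
    (hrec : ∀ k l, x k (l + 1) ≤
      C * θ ^ 2 * ∑ pq ∈ Finset.HasAntidiagonal.antidiagonal k, ∑ rs ∈ Finset.HasAntidiagonal.antidiagonal l,
        x pq.1 rs.1 * f pq.2 rs.2)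
    (hfM : ∀ N : ℕ, sumUpTo N f ≤ M) :
    ∀ N : ℕ, sumUpTo N x ≤ (1 + δ) * n := by
  have hcol : ∀ N, ∑ k ∈ range (N + 1), x k 0 = n := fun N => by
    rw [sum_eq_single_of_mem 0 (by simp) fun k _ hk => hxk0 k (Nat.one_le_iff_ne_zero.2 hk), hx00]
  intro N
  induction N with
  | zero => simpa [sumUpTo, hx00] using le_mul_of_one_le_left (by linarith) (by linarith : 1 ≤ 1 + δ)
  | succ N ih =>
    calc sumUpTo (N + 1) x = n + sumUpTo N fun k l => x k (l + 1) := by rw [sumUpTo_succ, hcol]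
      _ ≤ n + C * θ ^ 2 * (sumUpTo N x * sumUpTo N f) := by
        grw [sumUpTo_mono (hrec · ·), sumUpTo_const_mul, sumUpTo_antidiagonal_conv_le N hx hf]
      _ ≤ n + C * θ ^ 2 * ((1 + δ) * n * M) := by
        gcongr n + _ * ?_
        exact mul_le_mul ih (hfM N) (sumUpTo_nonneg hf) ((sumUpTo_nonneg hx).trans ih)
      _ ≤ (1 + δ) * n := by nlinarith

/-- abstract form of Lemma `invmetbounds` of the paper: if
`C θ² (1+δ) M ≤ δ` and `(x_{k,l})`, `(f_{k,l})` are nonnegative families with `x_{0,0} = n`,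
`x_{k,0} = 0` for `k ≥ 1`, satisfying the recursion
`x_{k,l+1} ≤ C θ² ∑_{p+q=k} ∑_{r+s=l} x_{p,r} f_{q,s}` and the bound
`∑_{k+l ≤ N} f_{k,l} ≤ M` for all `N`, then `∑_{k+l ≤ N} x_{k,l} ≤ (1+δ) n` for all `N`. -/
theorem inverse_metric_inductive_bound (n C M δ θ : ℝ)
    (hn : 1 ≤ n) (hC : 0 < C) (hM : 0 < M) (hδ : 0 < δ) (hθ : 0 ≤ θ)
    (hsmall : C * θ ^ 2 * (1 + δ) * M ≤ δ)
    (x f : ℕ → ℕ → ℝ)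
    (hx : ∀ k l, 0 ≤ x k l) (hf : ∀ k l, 0 ≤ f k l)
    (hx00 : x 0 0 = n) (hxk0 : ∀ k, 1 ≤ k → x k 0 = 0)
    (hrec : ∀ k l, x k (l + 1) ≤
      C * θ ^ 2 * ∑ pq ∈ Finset.HasAntidiagonal.antidiagonal k, ∑ rs ∈ Finset.HasAntidiagonal.antidiagonal l,
        x pq.1 rs.1 * f pq.2 rs.2)
    (hfM : ∀ N : ℕ, sumUpTo N f ≤ M) :
    ∀ N : ℕ, sumUpTo N x ≤ (1 + δ) * n :=
  inverse_metric_inductive_bound_general n C M δ θ hn hC hδ hsmall x f hx hf hx00 hxk0 hrec hfM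
end
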